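/- arXiv:1810.03656 — 4 statements merged into one kernel-verified Lean document; each statement's English description precedes it below -/
import Mathlib

section
/- For any two random variables X and Y defined on the same probability space and any real numbers a ≤ b, the probability P(a ≤ X ≤ b) is at most (1/2)·(1 + P(|X−Y| ≤ b−a) + d_TV(law(X), law(Y))), where d_TV denotes the total variation distance between the laws of X and Y. -/
/-!
Put `S = {a ≤ X ≤ b}` and `T = {a ≤ Y ≤ b}`. Inclusion–exclusion gives
`P S + P T ≤ 1 + P (S ∩ T)`, and `S ∩ T ⊆ {|X - Y| ≤ b - a}`. Finally `P S - P T` is the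
difference of the laws of `X` and `Y` on `[a, b]`, hence at most their total variation distance.
-/

open MeasureTheory

/-- Total variation distance between two measures: sup over measurable sets
of the absolute difference of the (real-valued) measures. -/
noncomputable def dTV {Ω : Type*} [MeasurableSpace Ω] (μ ν : Measure Ω) : ℝ :=
  ⨆ A : {A : Set Ω // MeasurableSet A}, |(μ A).toReal - (ν A).toReal|

section

variable {Ω : Type*} [MeasurableSpace Ω]

lemma abs_measureReal_sub_le_dTV (μ ν : Measure Ω) [IsFiniteMeasure μ] [IsFiniteMeasure ν]
    {A : Set Ω} (hA : MeasurableSet A) :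
    |μ.real A - ν.real A| ≤ dTV μ ν := by
  have hbdd : BddAbove (Set.range fun B : {B : Set Ω // MeasurableSet B} ↦
      |μ.real B.1 - ν.real B.1|) := by
    refine ⟨max (μ.real Set.univ) (ν.real Set.univ), ?_⟩
    rintro x ⟨B, rfl⟩
    exact abs_sub_le_of_nonneg_of_le measureReal_nonneg
      (le_max_of_le_left (measureReal_mono (Set.subset_univ _))) measureReal_nonneg
      (le_max_of_le_right (measureReal_mono (Set.subset_univ _)))
  exact le_ciSup hbdd ⟨A, hA⟩

lemma measureReal_add_measureReal_le_one_add_inter (μ : Measure Ω) [IsZeroOrProbabilityMeasure μ]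
    (s : Set Ω) {t : Set Ω} (ht : MeasurableSet t) :
    μ.real s + μ.real t ≤ 1 + μ.real (s ∩ t) := by
  rw [← measureReal_union_add_inter ht]
  exact add_le_add_left measureReal_le_one _

end

theorem stmt0_general {Ω : Type*} [MeasurableSpace Ω] (P : Measure Ω) [IsProbabilityMeasure P]
    (X Y : Ω → ℝ) (hX : Measurable X) (hY : Measurable Y)
    (a b : ℝ) :
    (P {ω | a ≤ X ω ∧ X ω ≤ b}).toReal ≤
      (1 / 2) * (1 + (P {ω | |X ω - Y ω| ≤ b - a}).toReal
        + dTV (P.map X) (P.map Y)) := by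
  have hinter : X ⁻¹' Set.Icc a b ∩ Y ⁻¹' Set.Icc a b ⊆ {ω | |X ω - Y ω| ≤ b - a} :=
    fun _ ⟨hXω, hYω⟩ ↦ (Real.dist_eq _ _).symm.trans_le (Real.dist_le_of_mem_Icc hXω hYω)
  have hI : MeasurableSet (Set.Icc a b) := measurableSet_Icc
  have hunion := measureReal_add_measureReal_le_one_add_inter P (X ⁻¹' Set.Icc a b) (hY hI)
  have hlaw := abs_measureReal_sub_le_dTV (P.map X) (P.map Y) hI
  rw [map_measureReal_apply hX hI, map_measureReal_apply hY hI] at hlaw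
  change P.real (X ⁻¹' Set.Icc a b) ≤ 1 / 2 * (1 + P.real _ + _)
  linarith [measureReal_mono (μ := P) hinter, le_of_abs_le hlaw]

/-- For random variables `X, Y` on a common probability space and `a ≤ b`,
`P(a ≤ X ≤ b) ≤ ½ (1 + P(|X - Y| ≤ b - a) + d_TV(law X, law Y))`. -/
theorem stmt0 {Ω : Type*} [MeasurableSpace Ω] (P : Measure Ω) [IsProbabilityMeasure P]
    (X Y : Ω → ℝ) (hX : Measurable X) (hY : Measurable Y)
    (a b : ℝ) (hab : a ≤ b) :
    (P {ω | a ≤ X ω ∧ X ω ≤ b}).toReal ≤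
      (1 / 2) * (1 + (P {ω | |X ω - Y ω| ≤ b - a}).toReal
        + dTV (P.map X) (P.map Y)) :=
  stmt0_general P X Y hX hY a b
end

section
/- Let X be a real-valued random variable with law λ_X, and let X' be a random variable whose law λ_{X'} is absolutely continuous with respect to λ_X with density f bounded by M. For ε ∈ (0,1), let Y be Bernoulli(ε) independent of (X, X'), and define X̃ = X' if Y = 1 and X̃ = X if Y = 0. Then the Hellinger affinity satisfies ρ(λ_X, λ_{X̃}) ≥ 1 − Cε², where C is a constant depending only on λ_X and λ_{X'} (not on ε). -/
/-!
Write `x = ε (f - 1)`, so the integrand is `√(1 + x)` with `x ≥ -1`. The elementary bound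
`√(1 + x) ≥ 1 + x/2 - x²/2` integrates to `1 + ε/2 (∫ f - 1) - ε²/2 ∫ (f - 1)²`; the linear term
vanishes because `f` is a probability density, and `|f - 1| ≤ M + 1` bounds the quadratic one.
-/

open MeasureTheory

/-- With `s = √(1 + x)` the gap is `(s - 1)² s (s + 2) / 2 ≥ 0`. -/
lemma one_add_half_sub_sq_le_sqrt_one_add {x : ℝ} (hx : -1 ≤ x) :
    1 + x / 2 - x ^ 2 / 2 ≤ Real.sqrt (1 + x) := by
  set s := Real.sqrt (1 + x) with hs
  have hs0 : 0 ≤ s := Real.sqrt_nonneg _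
  have hx_eq : x = s ^ 2 - 1 := by
    rw [hs, Real.sq_sqrt (by linarith)]; ring
  rw [hx_eq]
  nlinarith [mul_nonneg (mul_nonneg (sq_nonneg (s - 1)) hs0) (by linarith : (0 : ℝ) ≤ s + 2)]

lemma affine_sub_sq_le_sqrt_mix {ε y M : ℝ} (hε0 : 0 ≤ ε) (hε1 : ε ≤ 1)
    (hy0 : 0 ≤ y) (hyM : y ≤ M) :
    1 + ε * (y - 1) / 2 - (M + 1) ^ 2 / 2 * ε ^ 2 ≤ Real.sqrt (ε * y + (1 - ε)) := by
  have hsqrt := one_add_half_sub_sq_le_sqrt_one_add (x := ε * (y - 1)) (by nlinarith)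
  have hsq : (y - 1) ^ 2 ≤ (M + 1) ^ 2 := by nlinarith
  rw [show 1 + ε * (y - 1) = ε * y + (1 - ε) by ring] at hsqrt
  nlinarith [mul_le_mul_of_nonneg_left hsq (sq_nonneg ε)]

lemma integral_eq_one_of_isProbabilityMeasure_withDensity {α : Type*} [MeasurableSpace α]
    {μ : Measure α} {f : α → ℝ} (hf : AEStronglyMeasurable f μ) (hf0 : ∀ t, 0 ≤ f t)
    [IsProbabilityMeasure (μ.withDensity fun t => ENNReal.ofReal (f t))] :
    ∫ t, f t ∂μ = 1 := by
  have hlint : ∫⁻ t, ENNReal.ofReal (f t) ∂μ = 1 := by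
    rw [← setLIntegral_univ, ← withDensity_apply _ MeasurableSet.univ, measure_univ]
  rw [integral_eq_lintegral_of_nonneg_ae (ae_of_all _ hf0) hf, hlint, ENNReal.toReal_one]

lemma one_sub_mul_sq_le_integral_sqrt_mix {α : Type*} [MeasurableSpace α]
    {μ : Measure α} [IsProbabilityMeasure μ] {f : α → ℝ} {M : ℝ} (hf : Measurable f)
    (hf0 : ∀ t, 0 ≤ f t) (hM : ∀ t, f t ≤ M) (hf1 : ∫ t, f t ∂μ = 1)
    {ε : ℝ} (hε0 : 0 ≤ ε) (hε1 : ε ≤ 1) :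
    1 - (M + 1) ^ 2 / 2 * ε ^ 2 ≤ ∫ t, Real.sqrt (ε * f t + (1 - ε)) ∂μ := by
  have hfi : Integrable f μ :=
    (integrable_const M).mono' hf.aestronglyMeasurable
      (ae_of_all _ fun t => by rw [Real.norm_eq_abs, abs_of_nonneg (hf0 t)]; exact hM t)
  have hsqrt_int : Integrable (fun t => Real.sqrt (ε * f t + (1 - ε))) μ := by
    refine (integrable_const (Real.sqrt (M + 1))).mono'
      (Real.continuous_sqrt.measurable.comp ((hf.const_mul ε).add_const _)).aestronglyMeasurable
      (ae_of_all _ fun t => ?_)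
    rw [Real.norm_eq_abs, abs_of_nonneg (Real.sqrt_nonneg _)]
    exact Real.sqrt_le_sqrt (by nlinarith [hf0 t, hM t])
  have hlin : (fun t => 1 + ε * (f t - 1) / 2 - (M + 1) ^ 2 / 2 * ε ^ 2)
      = fun t => (1 - ε / 2 - (M + 1) ^ 2 / 2 * ε ^ 2) + ε / 2 * f t := by
    funext t; ring
  have hlin_int : Integrable (fun t => 1 + ε * (f t - 1) / 2 - (M + 1) ^ 2 / 2 * ε ^ 2) μ := by
    rw [hlin]; exact (integrable_const _).add (hfi.const_mul _)
  calc 1 - (M + 1) ^ 2 / 2 * ε ^ 2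
      = ∫ t, 1 + ε * (f t - 1) / 2 - (M + 1) ^ 2 / 2 * ε ^ 2 ∂μ := by
        rw [hlin, integral_add (integrable_const _) (hfi.const_mul _), integral_const,
          integral_const_mul, hf1, probReal_univ, one_smul]
        ring
    _ ≤ ∫ t, Real.sqrt (ε * f t + (1 - ε)) ∂μ :=
        integral_mono hlin_int hsqrt_int fun t => affine_sub_sq_le_sqrt_mix hε0 hε1 (hf0 t) (hM t)

/-- Let `λX` be a probability law on `ℝ` and `λX'` another law with density `f ≤ M`
with respect to `λX`.  For `ε ∈ (0,1)` the law of the mixture `X̃` (equal to `X'`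
with probability `ε` and to `X` otherwise) is `ε λX' + (1-ε) λX`, whose density
with respect to `λX` is `ε f + 1 - ε`, so the Hellinger affinity
`ρ(λX, λX̃) = ∫ √(ε f + 1 - ε) dλX`.  It satisfies `ρ(λX, λX̃) ≥ 1 - C ε²`
for a constant `C` depending only on `λX` and `λX'` (not on `ε`). -/
theorem stmt3 (lamX : Measure ℝ) [IsProbabilityMeasure lamX]
    (f : ℝ → ℝ) (hf : Measurable f) (hf0 : ∀ t, 0 ≤ f t)
    (M : ℝ) (hM : ∀ t, f t ≤ M)
    (lamX' : Measure ℝ)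
    (hX' : lamX' = lamX.withDensity (fun t => ENNReal.ofReal (f t)))
    [IsProbabilityMeasure lamX'] :
    ∃ C : ℝ, 0 < C ∧ ∀ ε : ℝ, 0 < ε → ε < 1 →
      1 - C * ε ^ 2 ≤ ∫ t, Real.sqrt (ε * f t + (1 - ε)) ∂lamX := by
  subst hX'
  have hf1 : ∫ t, f t ∂lamX = 1 :=
    integral_eq_one_of_isProbabilityMeasure_withDensity hf.aestronglyMeasurable hf0
  have hM0 : 0 ≤ M := (hf0 0).trans (hM 0)
  exact ⟨(M + 1) ^ 2 / 2, by positivity, fun ε hε0 hε1 =>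
    one_sub_mul_sq_le_integral_sqrt_mix hf hf0 hM hf1 hε0.le hε1.le⟩
end

section
/- Let X₁,…,Xₙ be i.i.d. with law λ_X, and X₁',…,Xₙ' be i.i.d. with law λ_{X'}, where λ_{X'} is absolutely continuous with respect to λ_X with bounded density. For each i let Y_i be Bernoulli(ε_i) independent of everything else, and set X̃_i = X_i' if Y_i = 1 and X̃_i = X_i otherwise. Then d_TV(law(X₁,…,Xₙ), law(X̃₁,…,X̃ₙ)) ≤ C (∑_{i=1}^n ε_i²)^{1/2}, where C depends only on λ_X and λ_{X'}. -/
/-!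
The mixed law has density `G x = ∏ i, gᵢ (x i)` with respect to `λX^⊗n`, where
`gᵢ = εᵢ f + (1 - εᵢ)`. For a probability density `h` with Bhattacharyya coefficient
`ρ = ∫ √h`, Cauchy–Schwarz applied to `|1 - h| = |1 - √h| (1 + √h)` gives
`∫ |1 - h| ≤ √(∫ (1 - √h)²) √(∫ (1 + √h)²) = 2 √(1 - ρ²) ≤ 2 √(2 (1 - ρ))`.
The coefficient of a product density is the product of the coefficients, so
`1 - ρ ≤ ∑ i, (1 - ρᵢ)`, and `1 - ρᵢ = ½ ∫ (1 - √gᵢ)² ≤ ½ ∫ (gᵢ - 1)² = ½ εᵢ² ∫ (f - 1)²`.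
Hence `C = 2 √(∫ (f - 1)² dλX) + 1` works; the `+ 1` only makes `C` positive.
-/

open MeasureTheory

section

variable {Ω : Type*} [MeasurableSpace Ω] {μ : Measure Ω}

theorem integral_mul_le_sqrt_mul_sqrt {f g : Ω → ℝ} (hf0 : 0 ≤ f) (hg0 : 0 ≤ g)
    (hf : MemLp f 2 μ) (hg : MemLp g 2 μ) :
    ∫ x, f x * g x ∂μ ≤ √(∫ x, f x ^ 2 ∂μ) * √(∫ x, g x ^ 2 ∂μ) := by
  have := integral_mul_le_Lp_mul_Lq_of_nonneg Real.HolderConjugate.two_two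
    (ae_of_all _ hf0) (ae_of_all _ hg0) (by simpa using hf) (by simpa using hg)
  simpa only [Real.rpow_two, Real.sqrt_eq_rpow] using this

theorem withDensity_ofReal_apply {h : Ω → ℝ} (hh : Integrable h μ) (h0 : 0 ≤ h)
    {s : Set Ω} (hs : MeasurableSet s) :
    μ.withDensity (fun x => ENNReal.ofReal (h x)) s = ENNReal.ofReal (∫ x in s, h x ∂μ) := by
  rw [withDensity_apply _ hs,
    ofReal_integral_eq_lintegral_ofReal hh.integrableOn (ae_of_all _ fun x => h0 x)]

theorem dTV_withDensity_le [IsFiniteMeasure μ] {h : Ω → ℝ} (hh : Integrable h μ) (h0 : 0 ≤ h) :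
    dTV μ (μ.withDensity fun x => ENNReal.ofReal (h x)) ≤ ∫ x, |1 - h x| ∂μ := by
  have : Nonempty {A : Set Ω // MeasurableSet A} := ⟨⟨∅, .empty⟩⟩
  refine ciSup_le fun ⟨A, hA⟩ => ?_
  rw [withDensity_ofReal_apply hh h0 hA,
    ENNReal.toReal_ofReal (setIntegral_nonneg hA fun x _ => h0 x)]
  calc |(μ A).toReal - ∫ x in A, h x ∂μ|
      = |∫ x in A, (1 - h x) ∂μ| := by
        rw [integral_sub (integrable_const 1) hh.integrableOn, setIntegral_const]
        simp [Measure.real]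
    _ ≤ ∫ x in A, |1 - h x| ∂μ := abs_integral_le_integral_abs
    _ ≤ ∫ x, |1 - h x| ∂μ :=
        setIntegral_le_integral ((integrable_const 1).sub hh).abs
          (ae_of_all _ fun x => abs_nonneg _)

theorem smul_withDensity_add_smul_eq_withDensity {f : Ω → ℝ} (hf0 : 0 ≤ f) {e : ℝ}
    (he0 : 0 ≤ e) (he1 : e ≤ 1) :
    ENNReal.ofReal e • μ.withDensity (fun x => ENNReal.ofReal (f x)) + ENNReal.ofReal (1 - e) • μ
      = μ.withDensity fun x => ENNReal.ofReal (e * f x + (1 - e)) := by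
  have hsplit : (fun x => ENNReal.ofReal (e * f x + (1 - e)))
      = ENNReal.ofReal e • (fun x => ENNReal.ofReal (f x)) + fun _ => ENNReal.ofReal (1 - e) := by
    funext x
    simp only [Pi.add_apply, Pi.smul_apply, smul_eq_mul]
    rw [ENNReal.ofReal_add (mul_nonneg he0 (hf0 x)) (by linarith), ENNReal.ofReal_mul he0]
  rw [hsplit, withDensity_add_right _ measurable_const, withDensity_smul' _ _ ENNReal.ofReal_ne_top,
    withDensity_const]

theorem memLp_two_sqrt {h : Ω → ℝ} (hh : Integrable h μ) (h0 : 0 ≤ h) :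
    MemLp (fun x => √(h x)) 2 μ := by
  refine (memLp_two_iff_integrable_sq (Real.continuous_sqrt.comp_aestronglyMeasurable hh.1)).2 ?_
  exact hh.congr (ae_of_all _ fun x => (Real.sq_sqrt (h0 x)).symm)

theorem integrable_sqrt [IsFiniteMeasure μ] {h : Ω → ℝ} (hh : Integrable h μ) (h0 : 0 ≤ h) :
    Integrable (fun x => √(h x)) μ :=
  (memLp_two_sqrt hh h0).integrable one_le_two

section Bhattacharyya

variable [IsProbabilityMeasure μ] {h : Ω → ℝ}

theorem integral_one_add_mul_sqrt_add (hh : Integrable h μ) (h0 : 0 ≤ h)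
    (h1 : ∫ x, h x ∂μ = 1) (c : ℝ) :
    ∫ x, (1 + c * √(h x) + h x) ∂μ = 2 + c * ∫ x, √(h x) ∂μ := by
  rw [integral_add (f := fun x => 1 + c * √(h x))
      ((integrable_const 1).add ((integrable_sqrt hh h0).const_mul c)) hh,
    integral_add (integrable_const 1) ((integrable_sqrt hh h0).const_mul c), integral_const,
    integral_const_mul, h1]
  simp only [probReal_univ, one_smul]
  ring

theorem integral_one_sub_sqrt_sq (hh : Integrable h μ) (h0 : 0 ≤ h) (h1 : ∫ x, h x ∂μ = 1) :
    ∫ x, (1 - √(h x)) ^ 2 ∂μ = 2 - 2 * ∫ x, √(h x) ∂μ := by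
  have hpt : ∀ x, (1 - √(h x)) ^ 2 = 1 + -2 * √(h x) + h x := fun x => by
    linear_combination Real.sq_sqrt (h0 x)
  simp_rw [hpt, integral_one_add_mul_sqrt_add hh h0 h1]
  ring

theorem integral_one_add_sqrt_sq (hh : Integrable h μ) (h0 : 0 ≤ h) (h1 : ∫ x, h x ∂μ = 1) :
    ∫ x, (1 + √(h x)) ^ 2 ∂μ = 2 + 2 * ∫ x, √(h x) ∂μ := by
  have hpt : ∀ x, (1 + √(h x)) ^ 2 = 1 + 2 * √(h x) + h x := fun x => by
    linear_combination Real.sq_sqrt (h0 x)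
  simp_rw [hpt, integral_one_add_mul_sqrt_add hh h0 h1]

theorem integral_sqrt_le_one (hh : Integrable h μ) (h0 : 0 ≤ h) (h1 : ∫ x, h x ∂μ = 1) :
    ∫ x, √(h x) ∂μ ≤ 1 := by
  have := integral_one_sub_sqrt_sq hh h0 h1 ▸ integral_nonneg fun x => sq_nonneg (1 - √(h x))
  linarith

theorem one_sub_integral_sqrt_le (hh : Integrable h μ) (h0 : 0 ≤ h) (h1 : ∫ x, h x ∂μ = 1)
    (hsq : Integrable (fun x => (h x - 1) ^ 2) μ) :
    1 - ∫ x, √(h x) ∂μ ≤ (∫ x, (h x - 1) ^ 2 ∂μ) / 2 := by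
  have hmono : ∫ x, (1 - √(h x)) ^ 2 ∂μ ≤ ∫ x, (h x - 1) ^ 2 ∂μ := by
    refine integral_mono ((memLp_const (1 : ℝ)).sub (memLp_two_sqrt hh h0)).integrable_sq hsq
      fun x => ?_
    have hs := Real.sqrt_nonneg (h x)
    have hsq := Real.sq_sqrt (h0 x)
    nlinarith [mul_nonneg (sq_nonneg (1 - √(h x))) (mul_nonneg hs (add_nonneg zero_le_two hs))]
  rw [integral_one_sub_sqrt_sq hh h0 h1] at hmono
  linarith

theorem integral_abs_one_sub_le (hh : Integrable h μ) (h0 : 0 ≤ h) (h1 : ∫ x, h x ∂μ = 1) :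
    ∫ x, |1 - h x| ∂μ ≤ 2 * √(1 - (∫ x, √(h x) ∂μ) ^ 2) := by
  have hL2sub : MemLp (fun x => 1 - √(h x)) 2 μ := (memLp_const (1 : ℝ)).sub (memLp_two_sqrt hh h0)
  have hL2add : MemLp (fun x => 1 + √(h x)) 2 μ := (memLp_const (1 : ℝ)).add (memLp_two_sqrt hh h0)
  have hpt : ∀ x, |1 - h x| = |1 - √(h x)| * (1 + √(h x)) := fun x => by
    rw [← abs_of_nonneg (by positivity : 0 ≤ 1 + √(h x)), ← abs_mul]
    congr 1
    linear_combination Real.sq_sqrt (h0 x)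
  have hρ0 : 0 ≤ ∫ x, √(h x) ∂μ := integral_nonneg fun x => Real.sqrt_nonneg _
  calc ∫ x, |1 - h x| ∂μ = ∫ x, |1 - √(h x)| * (1 + √(h x)) ∂μ := by simp_rw [hpt]
    _ ≤ √(∫ x, |1 - √(h x)| ^ 2 ∂μ) * √(∫ x, (1 + √(h x)) ^ 2 ∂μ) :=
        integral_mul_le_sqrt_mul_sqrt (f := fun x => |1 - √(h x)|) (g := fun x => 1 + √(h x))
          (fun x => abs_nonneg _) (fun x => by positivity) hL2sub.abs hL2add
    _ = 2 * √(1 - (∫ x, √(h x) ∂μ) ^ 2) := by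
        simp_rw [sq_abs]
        rw [integral_one_sub_sqrt_sq hh h0 h1, integral_one_add_sqrt_sq hh h0 h1,
          ← Real.sqrt_mul' _ (by linarith), show (2 - 2 * ∫ x, √(h x) ∂μ) * (2 + 2 * ∫ x, √(h x) ∂μ)
            = 2 ^ 2 * (1 - (∫ x, √(h x) ∂μ) ^ 2) by ring, Real.sqrt_mul (by norm_num),
          Real.sqrt_sq zero_le_two]

end Bhattacharyya

end

theorem Finset.one_sub_prod_le_sum_one_sub {ι : Type*} (s : Finset ι) {a : ι → ℝ}
    (h0 : ∀ i ∈ s, 0 ≤ a i) (h1 : ∀ i ∈ s, a i ≤ 1) :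
    1 - ∏ i ∈ s, a i ≤ ∑ i ∈ s, (1 - a i) := by
  induction s using Finset.cons_induction with
  | empty => simp
  | cons j s hj ih =>
    rw [Finset.prod_cons, Finset.sum_cons]
    have ih := ih (fun i hi => h0 i (Finset.mem_cons_of_mem hi))
      (fun i hi => h1 i (Finset.mem_cons_of_mem hi))
    have hp1 : ∏ i ∈ s, a i ≤ 1 := Finset.prod_le_one (fun i hi => h0 i (Finset.mem_cons_of_mem hi))
      (fun i hi => h1 i (Finset.mem_cons_of_mem hi))
    have hj0 := h0 j (Finset.mem_cons_self j s)
    nlinarith [h1 j (Finset.mem_cons_self j s)]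

section Pi

variable {ι : Type*} [Fintype ι] {α : ι → Type*} [∀ i, MeasurableSpace (α i)]
  {μ : ∀ i, Measure (α i)} {g : ∀ i, α i → ℝ}

theorem pi_withDensity_ofReal [∀ i, SigmaFinite (μ i)] (hg : ∀ i, Integrable (g i) (μ i))
    (hg0 : ∀ i, 0 ≤ g i) :
    Measure.pi (fun i => (μ i).withDensity fun t => ENNReal.ofReal (g i t))
      = (Measure.pi μ).withDensity fun x => ENNReal.ofReal (∏ i, g i (x i)) := by
  have := fun i => isFiniteMeasure_withDensity_ofReal (hg i).2
  refine Measure.pi_eq fun s hs => ?_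
  rw [withDensity_ofReal_apply (Integrable.fintype_prod_dep hg)
      (fun x => Finset.prod_nonneg fun i _ => hg0 i (x i)) (MeasurableSet.univ_pi hs),
    Measure.restrict_pi_pi, integral_fintype_prod_eq_prod,
    ENNReal.ofReal_prod_of_nonneg fun i _ => setIntegral_nonneg (hs i) fun t _ => hg0 i t]
  exact Finset.prod_congr rfl fun i _ => (withDensity_ofReal_apply (hg i) (hg0 i) (hs i)).symm

theorem dTV_pi_withDensity_le [∀ i, IsProbabilityMeasure (μ i)] (hg : ∀ i, Integrable (g i) (μ i))
    (hg0 : ∀ i, 0 ≤ g i) (hg1 : ∀ i, ∫ t, g i t ∂μ i = 1) :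
    dTV (Measure.pi μ) (Measure.pi fun i => (μ i).withDensity fun t => ENNReal.ofReal (g i t))
      ≤ 2 * √(2 * ∑ i, (1 - ∫ t, √(g i t) ∂μ i)) := by
  set G : (∀ i, α i) → ℝ := fun x => ∏ i, g i (x i)
  have hG : Integrable G (Measure.pi μ) := Integrable.fintype_prod_dep hg
  have hG0 : 0 ≤ G := fun x => Finset.prod_nonneg fun i _ => hg0 i (x i)
  have hG1 : ∫ x, G x ∂Measure.pi μ = 1 := by
    simp only [G, integral_fintype_prod_eq_prod, hg1, Finset.prod_const_one]
  have hρ : ∫ x, √(G x) ∂Measure.pi μ = ∏ i, ∫ t, √(g i t) ∂μ i := by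
    simp only [G, Real.sqrt_prod _ fun i _ => hg0 i _]
    exact integral_fintype_prod_eq_prod (fun i t => √(g i t))
  have hρ_le : 1 - ∫ x, √(G x) ∂Measure.pi μ ≤ ∑ i, (1 - ∫ t, √(g i t) ∂μ i) :=
    hρ ▸ Finset.univ.one_sub_prod_le_sum_one_sub
      (fun i _ => integral_nonneg fun t => Real.sqrt_nonneg _)
      (fun i _ => integral_sqrt_le_one (hg i) (hg0 i) (hg1 i))
  rw [pi_withDensity_ofReal hg hg0]
  calc _ ≤ ∫ x, |1 - G x| ∂Measure.pi μ := dTV_withDensity_le hG hG0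
    _ ≤ 2 * √(1 - (∫ x, √(G x) ∂Measure.pi μ) ^ 2) := integral_abs_one_sub_le hG hG0 hG1
    _ ≤ 2 * √(2 * ∑ i, (1 - ∫ t, √(g i t) ∂μ i)) := by
        gcongr
        nlinarith [sq_nonneg (1 - ∫ x, √(G x) ∂Measure.pi μ)]

end Pi

section Mixture

variable {Ω : Type*} [MeasurableSpace Ω] {μ : Measure Ω} [IsProbabilityMeasure μ] {f : Ω → ℝ}

theorem integral_mixture_density (hf : Integrable f μ) (hf1 : ∫ x, f x ∂μ = 1) (e : ℝ) :
    ∫ x, (e * f x + (1 - e)) ∂μ = 1 := by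
  rw [integral_add (hf.const_mul _) (integrable_const _), integral_const_mul, hf1,
    integral_const, probReal_univ, one_smul]
  ring

theorem one_sub_integral_sqrt_mixture_le (hf : MemLp f 2 μ) (hf0 : 0 ≤ f)
    (hf1 : ∫ x, f x ∂μ = 1) {e : ℝ} (he0 : 0 ≤ e) (he1 : e ≤ 1) :
    1 - ∫ x, √(e * f x + (1 - e)) ∂μ ≤ e ^ 2 * (∫ x, (f x - 1) ^ 2 ∂μ) / 2 := by
  have hpt : ∀ x, (e * f x + (1 - e) - 1) ^ 2 = e ^ 2 * (f x - 1) ^ 2 := fun x => by ring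
  have hsq : Integrable (fun x => (e * f x + (1 - e) - 1) ^ 2) μ := by
    simp_rw [hpt]
    exact (hf.sub (memLp_const 1)).integrable_sq.const_mul _
  have := one_sub_integral_sqrt_le (h := fun x => e * f x + (1 - e))
    ((hf.integrable one_le_two).const_mul e |>.add (integrable_const _))
    (fun x => add_nonneg (mul_nonneg he0 (hf0 x)) (sub_nonneg.2 he1))
    (integral_mixture_density (hf.integrable one_le_two) hf1 e) hsq
  rwa [integral_congr_ae (ae_of_all _ hpt), integral_const_mul] at this

theorem dTV_pi_mixture_le {ι : Type*} [Fintype ι] (hf : MemLp f 2 μ) (hf0 : 0 ≤ f)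
    (hf1 : ∫ x, f x ∂μ = 1) {ε : ι → ℝ} (hε0 : ∀ i, 0 ≤ ε i) (hε1 : ∀ i, ε i ≤ 1) :
    dTV (Measure.pi fun _ => μ) (Measure.pi fun i =>
        ENNReal.ofReal (ε i) • μ.withDensity (fun x => ENNReal.ofReal (f x))
          + ENNReal.ofReal (1 - ε i) • μ)
      ≤ 2 * √(∫ x, (f x - 1) ^ 2 ∂μ) * √(∑ i, ε i ^ 2) := by
  simp_rw [smul_withDensity_add_smul_eq_withDensity hf0 (hε0 _) (hε1 _)]
  have hfi := hf.integrable one_le_two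
  calc _ ≤ 2 * √(2 * ∑ i, (1 - ∫ x, √(ε i * f x + (1 - ε i)) ∂μ)) :=
        dTV_pi_withDensity_le (fun i => (hfi.const_mul _).add (integrable_const _))
          (fun i x => add_nonneg (mul_nonneg (hε0 i) (hf0 x)) (sub_nonneg.2 (hε1 i)))
          (fun i => integral_mixture_density hfi hf1 (ε i))
    _ ≤ 2 * √((∫ x, (f x - 1) ^ 2 ∂μ) * ∑ i, ε i ^ 2) := by
        refine mul_le_mul_of_nonneg_left (Real.sqrt_le_sqrt ?_) zero_le_two
        rw [Finset.mul_sum, Finset.mul_sum]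
        refine Finset.sum_le_sum fun i _ => ?_
        linarith [one_sub_integral_sqrt_mixture_le hf hf0 hf1 (hε0 i) (hε1 i)]
    _ = 2 * √(∫ x, (f x - 1) ^ 2 ∂μ) * √(∑ i, ε i ^ 2) := by
        rw [Real.sqrt_mul (integral_nonneg fun x => sq_nonneg _), mul_assoc]

end Mixture

/-- Let `X₁,…,Xₙ` be i.i.d. with law `λX` and `X̃ᵢ = Xᵢ'` (law `λX'`, with bounded
density `f ≤ M` with respect to `λX`) with probability `εᵢ`, `X̃ᵢ = Xᵢ` otherwise,
all independently.  The law of `(X̃₁,…,X̃ₙ)` is the product of the mixtures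
`εᵢ λX' + (1-εᵢ) λX`, and
`d_TV(law(X₁,…,Xₙ), law(X̃₁,…,X̃ₙ)) ≤ C (∑ εᵢ²)^{1/2}`,
where `C` depends only on `λX` and `λX'`. -/
theorem stmt6 (lamX : Measure ℝ) [IsProbabilityMeasure lamX]
    (f : ℝ → ℝ) (hf : Measurable f) (hf0 : ∀ t, 0 ≤ f t)
    (M : ℝ) (hM : ∀ t, f t ≤ M)
    (lamX' : Measure ℝ)
    (hX' : lamX' = lamX.withDensity (fun t => ENNReal.ofReal (f t)))
    [IsProbabilityMeasure lamX'] :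
    ∃ C : ℝ, 0 < C ∧ ∀ (n : ℕ) (ε : Fin n → ℝ), (∀ i, ε i ∈ Set.Icc (0:ℝ) 1) →
      dTV (Measure.pi (fun _ : Fin n => lamX))
          (Measure.pi (fun i : Fin n =>
            ENNReal.ofReal (ε i) • lamX' + ENNReal.ofReal (1 - ε i) • lamX))
        ≤ C * Real.sqrt (∑ i, (ε i) ^ 2) := by
  subst hX'
  have hf2 : MemLp f 2 lamX :=
    (memLp_top_of_bound hf.aestronglyMeasurable M (ae_of_all _ fun t => by
      rw [Real.norm_of_nonneg (hf0 t)]; exact hM t)).mono_exponent le_top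
  have hf1 : ∫ t, f t ∂lamX = 1 := by
    have := measure_univ (μ := lamX.withDensity fun t => ENNReal.ofReal (f t))
    rwa [withDensity_ofReal_apply (hf2.integrable one_le_two) hf0 .univ, Measure.restrict_univ,
      ENNReal.ofReal_eq_one] at this
  refine ⟨2 * √(∫ t, (f t - 1) ^ 2 ∂lamX) + 1, by positivity, fun n ε hε => ?_⟩
  calc _ ≤ 2 * √(∫ t, (f t - 1) ^ 2 ∂lamX) * √(∑ i, ε i ^ 2) :=
        dTV_pi_mixture_le hf2 hf0 hf1 (fun i => (hε i).1) (fun i => (hε i).2)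
    _ ≤ _ := by gcongr; linarith
end

section
/- Consider directed site percolation on ℤ²₊ where each site is open independently with probability p < p⃗_c,site(ℤ²), so that the probability A_k that there exists an open directed path of length k from the origin decays exponentially: P(A_k) ≤ c₁ e^{−c₂ k}. Then there exists ρ > 0 and constants a, b > 0 such that for all n ≥ 1, the probability that some directed path (v₀, v₁, …, vₙ) of length n with ‖v₀‖₁ ≤ n passes through fewer than ρn closed sites is at most a·e^{−bn}. -/
/-!
Cut a path of length `n` into `n / k` blocks of length `k`. If it has fewer than `n / (4k)` closed
sites, at least half of the blocks are entirely open, so for some set of `⌈(n / k) / 2⌉` blocks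
there is an open path of length `k` from the start of each of them. The block starts are determined
by the initial site (at most `(n + 1)²` choices) and the displacements of the blocks (`k + 1`
choices each). The sites explored from different block starts lie in disjoint boxes, so by
independence and translation invariance each such event has probability at most
`P(A_k) ^ ⌈(n / k) / 2⌉`. Choosing `k` with `(2 (k + 1))² P(A_k) ≤ e⁻²` makes the union bound
decay like `e^{-n / (2k)}`.
-/

open MeasureTheory ProbabilityTheory

lemma DependsOn.setOf_eq_preimage_restrict {ι β : Type*} {A : (ι → β) → Prop} {s : Finset ι}
    (h : DependsOn A (s : Set ι)) : {σ | A σ} = s.restrict ⁻¹' (s.restrict '' {σ | A σ}) := by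
  refine (Set.subset_preimage_image _ _).antisymm ?_
  rintro σ ⟨τ, hτ, he⟩
  have : A τ = A σ := h fun i hi => congrFun he ⟨i, hi⟩
  rwa [Set.mem_ofPred_eq, ← this]

lemma DependsOn.measurableSet_setOf {ι β : Type*} [MeasurableSpace β] [Countable β]
    [MeasurableSingletonClass β] {A : (ι → β) → Prop} {s : Finset ι}
    (h : DependsOn A (s : Set ι)) : MeasurableSet {σ | A σ} := by
  rw [h.setOf_eq_preimage_restrict]
  exact Finset.measurable_restrict s (Set.to_countable _).measurableSet

lemma MeasureTheory.Measure.eq_of_apply_true_eq {μ ν : Measure Bool} [IsProbabilityMeasure μ]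
    [IsProbabilityMeasure ν] (h : μ {true} = ν {true}) : μ = ν := by
  refine Measure.ext_iff_singleton.2 fun b => ?_
  cases b
  · have hfalse : ({false} : Set Bool) = {true}ᶜ := by ext b; simp
    rw [hfalse, measure_compl (measurableSet_singleton _) (measure_ne_top _ _),
      measure_compl (measurableSet_singleton _) (measure_ne_top _ _), h, measure_univ, measure_univ]
  · exact h

namespace ProbabilityTheory

variable {Ω ι β : Type*} [MeasurableSpace Ω] {P : Measure Ω} [MeasurableSpace β]
  {X : ι → Ω → β}

lemma iIndepFun.map_precomp_eq_map (hX : ∀ i, Measurable (X i)) (hind : iIndepFun X P)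
    (hlaw : ∀ i j, P.map (X i) = P.map (X j)) {e : ι → ι} (he : e.Injective) :
    P.map (fun ω i => X (e i) ω) = P.map (fun ω i => X i ω) := by
  rw [(hind.precomp he).map_fun_eq_infinitePi_map (fun i => hX (e i)),
    hind.map_fun_eq_infinitePi_map hX]
  exact congrArg _ (funext fun i => hlaw _ _)

variable [Countable β] [MeasurableSingletonClass β]

lemma iIndepFun.measure_inter_eq_mul_of_dependsOn (hX : ∀ i, Measurable (X i))
    (hind : iIndepFun X P) {s t : Finset ι} (hst : Disjoint s t) {A B : (ι → β) → Prop}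
    (hA : DependsOn A (s : Set ι)) (hB : DependsOn B (t : Set ι)) :
    P ({ω | A (fun i => X i ω)} ∩ {ω | B (fun i => X i ω)}) =
      P {ω | A (fun i => X i ω)} * P {ω | B (fun i => X i ω)} := by
  have preimage_eq : ∀ {C : (ι → β) → Prop} {u : Finset ι}, DependsOn C (u : Set ι) →
      {ω | C (fun i => X i ω)} =
        (fun ω => u.restrict (fun i => X i ω)) ⁻¹' (u.restrict '' {σ | C σ}) :=
    fun hC => congrArg (Set.preimage fun ω i => X i ω) hC.setOf_eq_preimage_restrict
  rw [preimage_eq hA, preimage_eq hB]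
  exact (hind.indepFun_finset s t hst hX).measure_inter_preimage_eq_mul _ _
    (Set.to_countable _).measurableSet (Set.to_countable _).measurableSet

lemma iIndepFun.measure_biInter_eq_prod_of_dependsOn (hX : ∀ i, Measurable (X i))
    (hind : iIndepFun X P) {J : Type*} (T : Finset J) {S : J → Finset ι}
    (hS : (T : Set J).PairwiseDisjoint S) {A : J → (ι → β) → Prop}
    (hA : ∀ j, DependsOn (A j) (S j : Set ι)) :
    P (⋂ j ∈ T, {ω | A j (fun i => X i ω)}) = ∏ j ∈ T, P {ω | A j (fun i => X i ω)} := by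
  classical
  have := hind.isProbabilityMeasure
  induction T using Finset.induction_on with
  | empty => simp
  | @insert j₀ T hj₀ ih =>
    have hdisj : Disjoint (S j₀) (T.biUnion S) := (Finset.disjoint_biUnion_right _ _ _).2
      fun j hj => hS (by simp) (by simp [hj]) fun h => hj₀ (h ▸ hj)
    have hdep : DependsOn (fun σ => ∀ j ∈ T, A j σ) (T.biUnion S : Set ι) :=
      fun σ τ h => propext <| forall₂_congr fun j hj => Eq.to_iff <| hA j fun i hi =>
        h i (Finset.mem_biUnion.2 ⟨j, hj, hi⟩)
    have hinter :
        (⋂ j ∈ T, {ω | A j (fun i => X i ω)}) = {ω | ∀ j ∈ T, A j (fun i => X i ω)} := by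
      ext; simp
    rw [Finset.set_biInter_insert, Finset.prod_insert hj₀, hinter,
      hind.measure_inter_eq_mul_of_dependsOn hX hdisj (hA j₀) hdep, ← hinter,
      ih (hS.subset (by simp))]

end ProbabilityTheory

namespace DirectedPercolation

def IsDirectedPath (γ : ℕ → ℕ × ℕ) (n : ℕ) : Prop :=
  ∀ j < n, γ (j + 1) = γ j + (1, 0) ∨ γ (j + 1) = γ j + (0, 1)

namespace IsDirectedPath

variable {γ : ℕ → ℕ × ℕ} {n : ℕ}

lemma shift (h : IsDirectedPath γ n) {t l : ℕ} (htl : t + l ≤ n) :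
    IsDirectedPath (fun i => γ (t + i)) l :=
  fun j hj => by simpa only [Nat.add_assoc] using h (t + j) (by omega)

lemma add_const (h : IsDirectedPath γ n) (v : ℕ × ℕ) : IsDirectedPath (fun i => v + γ i) n :=
  fun j hj => by rcases h j hj with e | e <;> simp only [e, add_assoc, true_or, or_true]

lemma sub_const (h : IsDirectedPath γ n) {v : ℕ × ℕ} (hv : ∀ i ≤ n, v ≤ γ i) :
    IsDirectedPath (fun i => γ i - v) n :=
  fun j hj => by
    rcases h j hj with e | e <;>
      simp only [e, tsub_add_eq_add_tsub (hv j hj.le), true_or, or_true]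

lemma le_succ (h : IsDirectedPath γ n) {j : ℕ} (hj : j < n) : γ j ≤ γ (j + 1) := by
  rcases h j hj with e | e <;> rw [e] <;> exact le_self_add

lemma sum_succ (h : IsDirectedPath γ n) {j : ℕ} (hj : j < n) :
    (γ (j + 1)).1 + (γ (j + 1)).2 = (γ j).1 + (γ j).2 + 1 := by
  rcases h j hj with e | e <;> rw [e] <;> simp only [Prod.fst_add, Prod.snd_add] <;> omega

lemma apply_le_apply (h : IsDirectedPath γ n) {i j : ℕ} (hij : i ≤ j) (hj : j ≤ n) :
    γ i ≤ γ j := by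
  induction j, hij using Nat.le_induction with
  | base => exact le_rfl
  | succ j _ ih => exact (ih (by omega)).trans (h.le_succ (by omega))

lemma sum_apply (h : IsDirectedPath γ n) {i : ℕ} (hi : i ≤ n) :
    (γ i).1 + (γ i).2 = (γ 0).1 + (γ 0).2 + i := by
  induction i with
  | zero => rfl
  | succ i ih => rw [h.sum_succ hi, ih (by omega)]; ring

end IsDirectedPath

def box (k : ℕ) (v : ℕ × ℕ) : Finset (ℕ × ℕ) :=
  (Finset.Icc v (v + (k, k))).filter fun w => v.1 + v.2 < w.1 + w.2 ∧ w.1 + w.2 ≤ v.1 + v.2 + k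

lemma mem_box {k : ℕ} {v w : ℕ × ℕ} :
    w ∈ box k v ↔ v ≤ w ∧ v.1 + v.2 < w.1 + w.2 ∧ w.1 + w.2 ≤ v.1 + v.2 + k := by
  simp only [box, Finset.mem_filter, Finset.mem_Icc, Prod.le_def, Prod.fst_add, Prod.snd_add]
  omega

lemma disjoint_box {k : ℕ} {v w : ℕ × ℕ} (h : v.1 + v.2 + k ≤ w.1 + w.2) :
    Disjoint (box k v) (box k w) :=
  Finset.disjoint_left.2 fun x hv hw => by rw [mem_box] at hv hw; omega

lemma IsDirectedPath.mem_box {γ : ℕ → ℕ × ℕ} {k i : ℕ} (h : IsDirectedPath γ k) (h1 : 1 ≤ i)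
    (hk : i ≤ k) : γ i ∈ box k (γ 0) := by
  rw [DirectedPercolation.mem_box, h.sum_apply hk]
  exact ⟨h.apply_le_apply (Nat.zero_le i) hk, by omega, by omega⟩

def HasOpenPathFrom (σ : ℕ × ℕ → Bool) (k : ℕ) (v : ℕ × ℕ) : Prop :=
  ∃ γ : ℕ → ℕ × ℕ, γ 0 = v ∧ IsDirectedPath γ k ∧ ∀ i, 1 ≤ i → i ≤ k → σ (γ i) = true

lemma HasOpenPathFrom.congr {σ τ : ℕ × ℕ → Bool} {k : ℕ} {v : ℕ × ℕ}
    (h : HasOpenPathFrom σ k v) (hστ : ∀ w ∈ box k v, σ w = τ w) : HasOpenPathFrom τ k v := by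
  obtain ⟨γ, rfl, hγ, hopen⟩ := h
  exact ⟨γ, rfl, hγ, fun i h1 hk => hστ _ (hγ.mem_box h1 hk) ▸ hopen i h1 hk⟩

lemma dependsOn_hasOpenPathFrom (k : ℕ) (v : ℕ × ℕ) :
    DependsOn (fun σ => HasOpenPathFrom σ k v) (box k v : Set (ℕ × ℕ)) :=
  fun _ _ h => propext ⟨fun hσ => hσ.congr h, fun hτ => hτ.congr fun w hw => (h w hw).symm⟩

lemma hasOpenPathFrom_iff_zero {σ : ℕ × ℕ → Bool} {k : ℕ} {v : ℕ × ℕ} :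
    HasOpenPathFrom σ k v ↔ HasOpenPathFrom (fun w => σ (v + w)) k 0 := by
  constructor
  · rintro ⟨γ, rfl, hγ, hopen⟩
    have hle : ∀ i ≤ k, γ 0 ≤ γ i := fun i hi => hγ.apply_le_apply (Nat.zero_le i) hi
    refine ⟨fun i => γ i - γ 0, tsub_self _, hγ.sub_const hle, fun i h1 hk => ?_⟩
    simpa only [add_tsub_cancel_of_le (hle i hk)] using hopen i h1 hk
  · rintro ⟨γ, h0, hγ, hopen⟩
    exact ⟨fun i => v + γ i, by simp [h0], hγ.add_const v, hopen⟩

/-- Block `j` of a path cut into blocks of length `k` moves by `(d j, k - d j)`. Past the `m`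
blocks the dummy step `(k, 0)` keeps `blockStart_sum` unconditional. -/
def blockStep {m : ℕ} (k : ℕ) (d : Fin m → Fin (k + 1)) (j : ℕ) : ℕ × ℕ :=
  if h : j < m then (d ⟨j, h⟩, k - d ⟨j, h⟩) else (k, 0)

def blockStart {m : ℕ} (k : ℕ) (v : ℕ × ℕ) (d : Fin m → Fin (k + 1)) : ℕ → ℕ × ℕ
  | 0 => v
  | j + 1 => blockStart k v d j + blockStep k d j

lemma blockStart_sum {m k : ℕ} (v : ℕ × ℕ) (d : Fin m → Fin (k + 1)) (j : ℕ) :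
    (blockStart k v d j).1 + (blockStart k v d j).2 = v.1 + v.2 + j * k := by
  induction j with
  | zero => simp [blockStart]
  | succ j ih =>
    have hstep : (blockStep k d j).1 + (blockStep k d j).2 = k := by
      unfold blockStep; split_ifs with h
      · have := (d ⟨j, h⟩).isLt; simp only; omega
      · simp
    simp only [blockStart, Prod.fst_add, Prod.snd_add]
    rw [add_mul, one_mul, add_add_add_comm, ih, hstep, add_assoc]

lemma disjoint_box_blockStart {m k : ℕ} (v : ℕ × ℕ) (d : Fin m → Fin (k + 1)) {i j : ℕ}
    (hij : i ≠ j) : Disjoint (box k (blockStart k v d i)) (box k (blockStart k v d j)) := by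
  wlog h : i < j generalizing i j
  · exact (this hij.symm (by omega)).symm
  apply disjoint_box
  rw [blockStart_sum, blockStart_sum]
  nlinarith

lemma IsDirectedPath.exists_blockStart_eq {γ : ℕ → ℕ × ℕ} {n m k : ℕ}
    (hγ : IsDirectedPath γ n) (hmk : m * k ≤ n) :
    ∃ d : Fin m → Fin (k + 1), ∀ j ≤ m, γ (j * k) = blockStart k (γ 0) d j := by
  have hincr : ∀ j < m, γ (j * k) ≤ γ ((j + 1) * k) ∧
      (γ ((j + 1) * k)).1 + (γ ((j + 1) * k)).2 = (γ (j * k)).1 + (γ (j * k)).2 + k := by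
    intro j hj
    have hj' : (j + 1) * k ≤ n := le_trans (Nat.mul_le_mul_right k hj) hmk
    refine ⟨hγ.apply_le_apply (Nat.mul_le_mul_right k j.le_succ) hj', ?_⟩
    rw [hγ.sum_apply hj', hγ.sum_apply (i := j * k) (by nlinarith)]; ring
  refine ⟨fun j => ⟨(γ ((j + 1) * k)).1 - (γ (j * k)).1, ?_⟩, fun j hj => ?_⟩
  · have := hincr j j.isLt; rw [Prod.le_def] at this; omega
  induction j with
  | zero => simp [blockStart]
  | succ j ih =>
    obtain ⟨hle, hsum⟩ := hincr j hj
    rw [Prod.le_def] at hle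
    rw [blockStart, ← ih (by omega), blockStep, dif_pos (by omega)]
    ext <;> simp only [Prod.fst_add, Prod.snd_add] <;> omega

lemma card_filter_exists_mem_Ioc_le (C : Finset ℕ) (k m : ℕ) :
    ((Finset.range m).filter fun j => ∃ i ∈ C, j * k < i ∧ i ≤ (j + 1) * k).card ≤ C.card := by
  refine (Finset.card_le_card fun j hj => ?_).trans
    (Finset.card_image_le (f := fun i => (i - 1) / k))
  obtain ⟨-, i, hi, hlo, hhi⟩ := Finset.mem_filter.1 hj
  exact Finset.mem_image.2 ⟨i, hi, Nat.div_eq_of_lt_le (by omega) (by omega)⟩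

lemma IsDirectedPath.exists_openBlocks {σ : ℕ × ℕ → Bool} {γ : ℕ → ℕ × ℕ} {k n : ℕ}
    (hk : 0 < k) (hγ : IsDirectedPath γ n)
    (hclosed : 4 * k * ((Finset.Icc 1 n).filter fun i => σ (γ i) = false).card < n) :
    ∃ d : Fin (n / k) → Fin (k + 1),
      ∃ T ∈ (Finset.range (n / k)).powersetCard (n / k - n / k / 2),
        ∀ j ∈ T, HasOpenPathFrom σ k (blockStart k (γ 0) d j) := by
  set m := n / k
  have hmk : m * k ≤ n := Nat.div_mul_le_self n k
  obtain ⟨d, hd⟩ := hγ.exists_blockStart_eq hmk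
  set closed := (Finset.Icc 1 n).filter fun i => σ (γ i) = false
  set bad : Finset ℕ :=
    (Finset.range m).filter fun j => ∃ i ∈ closed, j * k < i ∧ i ≤ (j + 1) * k
  have hbad : 2 * bad.card ≤ m := by
    have hle : bad.card * k ≤ closed.card * k :=
      Nat.mul_le_mul_right k (card_filter_exists_mem_Ioc_le closed k m)
    rw [Nat.le_div_iff_mul_le hk]
    linarith
  have hgood : (Finset.range m \ bad).card = m - bad.card := by
    rw [Finset.card_sdiff_of_subset (Finset.filter_subset _ _), Finset.card_range]
  obtain ⟨T, hT, hTcard⟩ := Finset.exists_subset_card_eq (s := Finset.range m \ bad)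
    (n := m - m / 2) (by omega)
  refine ⟨d, T, Finset.mem_powersetCard.2 ⟨hT.trans Finset.sdiff_subset, hTcard⟩, fun j hj => ?_⟩
  obtain ⟨hjm, hjgood⟩ := Finset.mem_sdiff.1 (hT hj)
  rw [Finset.mem_range] at hjm
  have hjn : (j + 1) * k ≤ n := le_trans (Nat.mul_le_mul_right k hjm) hmk
  refine ⟨fun i => γ (j * k + i), hd j hjm.le, hγ.shift (by linarith), fun i h1 h2 => ?_⟩
  by_contra hi
  exact hjgood (Finset.mem_filter.2 ⟨Finset.mem_range.2 hjm, j * k + i,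
    Finset.mem_filter.2 ⟨Finset.mem_Icc.2 ⟨by omega, by linarith⟩, by simpa using hi⟩,
    by omega, by linarith⟩)

section Probability

variable {Ω : Type*} [MeasurableSpace Ω] {P : Measure Ω} {X : ℕ × ℕ → Ω → Bool}

lemma map_eq_map_of_measure_eq_true [IsProbabilityMeasure P] (hX : ∀ v, Measurable (X v))
    {p : ENNReal} (hp : ∀ v, P {ω | X v ω = true} = p) (v w : ℕ × ℕ) :
    P.map (X v) = P.map (X w) := by
  have := Measure.isProbabilityMeasure_map (μ := P) (hX v).aemeasurable
  have := Measure.isProbabilityMeasure_map (μ := P) (hX w).aemeasurable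
  refine Measure.eq_of_apply_true_eq ?_
  rw [Measure.map_apply (hX v) (measurableSet_singleton _),
    Measure.map_apply (hX w) (measurableSet_singleton _)]
  exact (hp v).trans (hp w).symm

lemma measure_hasOpenPathFrom_eq (hX : ∀ v, Measurable (X v)) (hind : iIndepFun X P)
    (hlaw : ∀ v w, P.map (X v) = P.map (X w)) (k : ℕ) (v : ℕ × ℕ) :
    P {ω | HasOpenPathFrom (fun w => X w ω) k v} =
      P {ω | HasOpenPathFrom (fun w => X w ω) k 0} := by
  have hS : MeasurableSet {σ | HasOpenPathFrom σ k 0} :=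
    (dependsOn_hasOpenPathFrom k 0).measurableSet_setOf
  have hshift := hind.map_precomp_eq_map hX hlaw (add_right_injective v)
  calc P {ω | HasOpenPathFrom (fun w => X w ω) k v}
      = P ((fun ω w => X (v + w) ω) ⁻¹' {σ | HasOpenPathFrom σ k 0}) := by
        congr 1; ext ω; exact hasOpenPathFrom_iff_zero (σ := fun w => X w ω)
    _ = P.map (fun ω w => X w ω) {σ | HasOpenPathFrom σ k 0} := by
        rw [← hshift, Measure.map_apply (measurable_pi_lambda _ fun w => hX (v + w)) hS]
    _ = P {ω | HasOpenPathFrom (fun w => X w ω) k 0} :=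
        Measure.map_apply (measurable_pi_lambda _ hX) hS

lemma measure_biInter_hasOpenPathFrom_blockStart (hX : ∀ v, Measurable (X v))
    (hind : iIndepFun X P) (hlaw : ∀ v w, P.map (X v) = P.map (X w)) {m k : ℕ} (v : ℕ × ℕ)
    (d : Fin m → Fin (k + 1)) (T : Finset ℕ) :
    P (⋂ j ∈ T, {ω | HasOpenPathFrom (fun w => X w ω) k (blockStart k v d j)}) =
      P {ω | HasOpenPathFrom (fun w => X w ω) k 0} ^ T.card := by
  rw [hind.measure_biInter_eq_prod_of_dependsOn hX T
    (fun i _ j _ hij => disjoint_box_blockStart v d hij) fun j => dependsOn_hasOpenPathFrom k _]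
  simp_rw [measure_hasOpenPathFrom_eq hX hind hlaw]
  exact Finset.prod_const _

lemma measureReal_exists_path_fewClosed_le [IsProbabilityMeasure P]
    (hX : ∀ v, Measurable (X v)) (hind : iIndepFun X P)
    (hlaw : ∀ v w, P.map (X v) = P.map (X w)) {k : ℕ} (hk : 0 < k) (n : ℕ) :
    P.real {ω | ∃ γ : ℕ → ℕ × ℕ, (γ 0).1 + (γ 0).2 ≤ n ∧ IsDirectedPath γ n ∧
        4 * k * ((Finset.Icc 1 n).filter fun i => X (γ i) ω = false).card < n} ≤
      (n + 1) ^ 2 * (2 * (k + 1)) ^ (n / k) *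
        P.real {ω | HasOpenPathFrom (fun w => X w ω) k 0} ^ (n / k - n / k / 2) := by
  set m := n / k
  set q := m - m / 2
  set I := (Finset.range (n + 1) ×ˢ Finset.range (n + 1)) ×ˢ
    (Finset.univ : Finset (Fin m → Fin (k + 1))) ×ˢ (Finset.range m).powersetCard q
  have hcover : {ω | ∃ γ : ℕ → ℕ × ℕ, (γ 0).1 + (γ 0).2 ≤ n ∧ IsDirectedPath γ n ∧
      4 * k * ((Finset.Icc 1 n).filter fun i => X (γ i) ω = false).card < n} ⊆
      ⋃ t ∈ I, ⋂ j ∈ t.2.2,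
        {ω | HasOpenPathFrom (fun w => X w ω) k (blockStart k t.1 t.2.1 j)} := by
    rintro ω ⟨γ, hv, hγ, hclosed⟩
    obtain ⟨d, T, hT, hopen⟩ := hγ.exists_openBlocks (σ := fun w => X w ω) hk hclosed
    refine Set.mem_biUnion (x := (γ 0, d, T)) (Finset.mem_coe.2 ?_) (Set.mem_iInter₂.2 hopen)
    simp only [I, Finset.mem_product, Finset.mem_range, Finset.mem_univ, true_and]
    exact ⟨⟨by omega, by omega⟩, hT⟩
  have hcard : (I.card : ℝ) ≤ (n + 1) ^ 2 * (2 * (k + 1)) ^ m := by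
    have : I.card ≤ (n + 1) ^ 2 * (2 * (k + 1)) ^ m := by
      simp only [I, Finset.card_product, Finset.card_range, Finset.card_univ, Fintype.card_fun,
        Fintype.card_fin, Finset.card_powersetCard]
      rw [mul_pow, sq, mul_comm (2 ^ m)]
      gcongr
      exact Nat.choose_le_two_pow m q
    exact_mod_cast this
  calc _ ≤ P.real (⋃ t ∈ I, ⋂ j ∈ t.2.2,
          {ω | HasOpenPathFrom (fun w => X w ω) k (blockStart k t.1 t.2.1 j)}) :=
        measureReal_mono hcover (measure_ne_top _ _)
    _ ≤ ∑ t ∈ I, P.real (⋂ j ∈ t.2.2,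
          {ω | HasOpenPathFrom (fun w => X w ω) k (blockStart k t.1 t.2.1 j)}) :=
        measureReal_biUnion_finset_le _ _
    _ = ∑ t ∈ I, P.real {ω | HasOpenPathFrom (fun w => X w ω) k 0} ^ q := by
        refine Finset.sum_congr rfl fun t ht => ?_
        simp only [I, Finset.mem_product, Finset.mem_powersetCard] at ht
        rw [measureReal_def, measure_biInter_hasOpenPathFrom_blockStart hX hind hlaw,
          ENNReal.toReal_pow, ht.2.2.2, measureReal_def]
    _ ≤ _ := by
        rw [Finset.sum_const, nsmul_eq_mul]
        gcongr

end Probability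

section Arithmetic

open Filter Topology Real

lemma exists_blockLength {c₁ c₂ : ℝ} (hc₂ : 0 < c₂) :
    ∃ k : ℕ, 0 < k ∧ (2 * ((k : ℝ) + 1)) ^ 2 * (c₁ * exp (-c₂ * k)) ≤ exp (-2) := by
  have hlim : Tendsto (fun k : ℕ => 4 * c₁ * exp c₂ *
      (((k : ℝ) + 1) ^ (2 : ℝ) * exp (-c₂ * ((k : ℝ) + 1)))) atTop (𝓝 0) := by
    simpa using ((tendsto_rpow_mul_exp_neg_mul_atTop_nhds_zero 2 c₂ hc₂).comp
      (tendsto_atTop_add_const_right _ 1 tendsto_natCast_atTop_atTop)).const_mul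
        (4 * c₁ * exp c₂)
  obtain ⟨k, hk, hle⟩ :=
    ((eventually_gt_atTop 0).and (hlim.eventually (ge_mem_nhds (exp_pos (-2))))).exists
  refine ⟨k, hk, le_of_eq_of_le ?_ hle⟩
  have : exp (-c₂ * k) = exp c₂ * exp (-c₂ * (k + 1)) := by rw [← exp_add]; ring_nf
  rw [rpow_two, this]; ring

lemma sq_add_one_le_mul_exp {c x : ℝ} (hc : 0 < c) (hx : 0 ≤ x) :
    (x + 1) ^ 2 ≤ (1 + 2 / c) ^ 2 * exp (c * x) := by
  have hlin : x + 1 ≤ (1 + 2 / c) * exp (c * x / 2) :=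
    calc x + 1 ≤ (1 + 2 / c) * (c * x / 2 + 1) := by
          have hcancel : 2 / c * (c * x / 2) = x := by field_simp
          nlinarith [div_pos two_pos hc]
      _ ≤ (1 + 2 / c) * exp (c * x / 2) := by gcongr; linarith [add_one_le_exp (c * x / 2)]
  calc (x + 1) ^ 2 ≤ ((1 + 2 / c) * exp (c * x / 2)) ^ 2 := by gcongr
    _ = (1 + 2 / c) ^ 2 * exp (c * x) := by rw [mul_pow, sq (exp _), ← exp_add]; ring_nf

lemma union_bound_le_exp {k n : ℕ} (hk : 0 < k) {ε : ℝ} (hε : 0 ≤ ε)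
    (hθ : (2 * ((k : ℝ) + 1)) ^ 2 * ε ≤ exp (-2)) :
    ((n : ℝ) + 1) ^ 2 * (2 * ((k : ℝ) + 1)) ^ (n / k) * ε ^ (n / k - n / k / 2) ≤
      (1 + 4 * k) ^ 2 * exp 1 * exp (-(1 / (2 * k)) * n) := by
  set m := n / k
  set q := m - m / 2
  have hkR : (0 : ℝ) < k := by exact_mod_cast hk
  have hblocks : (2 * ((k : ℝ) + 1)) ^ m * ε ^ q ≤ exp (-m) :=
    calc (2 * ((k : ℝ) + 1)) ^ m * ε ^ q ≤ (2 * ((k : ℝ) + 1)) ^ (2 * q) * ε ^ q := by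
          gcongr
          · linarith
          · omega
      _ = ((2 * ((k : ℝ) + 1)) ^ 2 * ε) ^ q := by rw [pow_mul, ← mul_pow]
      _ ≤ exp (-2) ^ q := by gcongr
      _ = exp (-(2 * q : ℕ)) := by rw [← exp_nat_mul]; push_cast; ring_nf
      _ ≤ exp (-m) := by gcongr; omega
  have hm : exp (-m) ≤ exp 1 * exp (-(1 / k) * n) := by
    rw [← exp_add, exp_le_exp]
    have hn : (n : ℝ) < (m + 1) * k := by
      exact_mod_cast Nat.lt_mul_of_div_lt (Nat.lt_succ_self m) hk
    have : 1 / k * (n : ℝ) < m + 1 := by rw [one_div_mul_eq_div, div_lt_iff₀ hkR]; exact hn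
    linarith
  have hpoly : ((n : ℝ) + 1) ^ 2 ≤ (1 + 4 * k) ^ 2 * exp (1 / (2 * k) * n) := by
    have := sq_add_one_le_mul_exp (c := 1 / (2 * k)) (by positivity) (Nat.cast_nonneg n)
    rwa [show 2 / (1 / (2 * (k : ℝ))) = 4 * k by field_simp; ring] at this
  have hexp : exp (1 / (2 * k) * n) * exp (-(1 / k) * n) = exp (-(1 / (2 * k)) * n) := by
    rw [← exp_add]; congr 1; field_simp; ring
  calc ((n : ℝ) + 1) ^ 2 * (2 * ((k : ℝ) + 1)) ^ m * ε ^ q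
      = ((n : ℝ) + 1) ^ 2 * ((2 * ((k : ℝ) + 1)) ^ m * ε ^ q) := by ring
    _ ≤ (1 + 4 * k) ^ 2 * exp (1 / (2 * k) * n) * (exp 1 * exp (-(1 / k) * n)) :=
        mul_le_mul hpoly (hblocks.trans hm) (by positivity) (by positivity)
    _ = (1 + 4 * k) ^ 2 * exp 1 * exp (-(1 / (2 * k)) * n) := by rw [← hexp]; ring

end Arithmetic

end DirectedPercolation

open DirectedPercolation

theorem stmt14_general {Ω : Type*} [MeasurableSpace Ω] (P : Measure Ω) [IsProbabilityMeasure P]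
    (X : ℕ × ℕ → Ω → Bool) (hmeas : ∀ v, Measurable (X v))
    (hindep : iIndepFun X P)
    (p : ENNReal) (hid : ∀ v, P {ω | X v ω = true} = p)
    (c₁ c₂ : ℝ) (hc₂ : 0 < c₂)
    (hA : ∀ k : ℕ,
      (P {ω | ∃ γ : ℕ → ℕ × ℕ, γ 0 = (0, 0) ∧
          (∀ j < k, γ (j + 1) = γ j + (1, 0) ∨ γ (j + 1) = γ j + (0, 1)) ∧
          (∀ i, 1 ≤ i → i ≤ k → X (γ i) ω = true)}).toReal
        ≤ c₁ * Real.exp (-c₂ * k)) :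
    ∃ ρ : ℝ, 0 < ρ ∧ ∃ a b : ℝ, 0 < a ∧ 0 < b ∧ ∀ n : ℕ, 1 ≤ n →
      (P {ω | ∃ γ : ℕ → ℕ × ℕ,
          ((γ 0).1 + (γ 0).2 : ℝ) ≤ n ∧
          (∀ j < n, γ (j + 1) = γ j + (1, 0) ∨ γ (j + 1) = γ j + (0, 1)) ∧
          (((Finset.Icc 1 n).filter (fun i => X (γ i) ω = false)).card : ℝ) < ρ * n}).toReal
        ≤ a * Real.exp (-b * n) := by
  obtain ⟨k, hk, hθ⟩ := exists_blockLength (c₁ := c₁) hc₂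
  have hkR : (0 : ℝ) < k := by exact_mod_cast hk
  have hlaw := map_eq_map_of_measure_eq_true hmeas hid
  refine ⟨1 / (4 * k), by positivity, (1 + 4 * k) ^ 2 * Real.exp 1, 1 / (2 * k), by positivity,
    by positivity, fun n _ => ?_⟩
  have hfew : ∀ c : ℕ, (c : ℝ) < 1 / (4 * k) * n → 4 * k * c < n := fun c hc => by
    rw [one_div_mul_eq_div, lt_div_iff₀ (by positivity), mul_comm] at hc
    exact_mod_cast hc
  calc _ ≤ P.real {ω | ∃ γ : ℕ → ℕ × ℕ, (γ 0).1 + (γ 0).2 ≤ n ∧ IsDirectedPath γ n ∧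
          4 * k * ((Finset.Icc 1 n).filter fun i => X (γ i) ω = false).card < n} :=
        measureReal_mono (by
          rintro ω ⟨γ, hv, hγ, hclosed⟩
          exact ⟨γ, by exact_mod_cast hv, hγ, hfew _ hclosed⟩) (measure_ne_top _ _)
    _ ≤ (n + 1) ^ 2 * (2 * (k + 1)) ^ (n / k) *
          P.real {ω | HasOpenPathFrom (fun w => X w ω) k 0} ^ (n / k - n / k / 2) :=
        measureReal_exists_path_fewClosed_le hmeas hindep hlaw hk n
    _ ≤ (n + 1) ^ 2 * (2 * (k + 1)) ^ (n / k) *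
          (c₁ * Real.exp (-c₂ * k)) ^ (n / k - n / k / 2) := by
        gcongr
        exact hA k
    _ ≤ _ := union_bound_le_exp hk (measureReal_nonneg.trans (hA k)) hθ

/-- Directed site percolation on `ℤ²₊`: sites are open (`X v = true`)
independently with probability `p`, subcritical in the sense that the
probability of an open directed path of length `k` from the origin decays
exponentially: `P(A_k) ≤ c₁ e^{-c₂ k}`.  Then there exist `ρ > 0` and
`a, b > 0` such that for all `n ≥ 1`, the probability that some directed path
`(v₀,…,vₙ)` with `‖v₀‖₁ ≤ n` passes through fewer than `ρ n` closed sites is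
at most `a e^{-b n}`. -/
theorem stmt14 {Ω : Type*} [MeasurableSpace Ω] (P : Measure Ω) [IsProbabilityMeasure P]
    (X : ℕ × ℕ → Ω → Bool) (hmeas : ∀ v, Measurable (X v))
    (hindep : iIndepFun X P)
    (p : ENNReal) (hid : ∀ v, P {ω | X v ω = true} = p)
    (c₁ c₂ : ℝ) (hc₁ : 0 < c₁) (hc₂ : 0 < c₂)
    (hA : ∀ k : ℕ,
      (P {ω | ∃ γ : ℕ → ℕ × ℕ, γ 0 = (0, 0) ∧
          (∀ j < k, γ (j + 1) = γ j + (1, 0) ∨ γ (j + 1) = γ j + (0, 1)) ∧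
          (∀ i, 1 ≤ i → i ≤ k → X (γ i) ω = true)}).toReal
        ≤ c₁ * Real.exp (-c₂ * k)) :
    ∃ ρ : ℝ, 0 < ρ ∧ ∃ a b : ℝ, 0 < a ∧ 0 < b ∧ ∀ n : ℕ, 1 ≤ n →
      (P {ω | ∃ γ : ℕ → ℕ × ℕ,
          ((γ 0).1 + (γ 0).2 : ℝ) ≤ n ∧
          (∀ j < n, γ (j + 1) = γ j + (1, 0) ∨ γ (j + 1) = γ j + (0, 1)) ∧
          (((Finset.Icc 1 n).filter (fun i => X (γ i) ω = false)).card : ℝ) < ρ * n}).toReal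
        ≤ a * Real.exp (-b * n) :=
  stmt14_general P X hmeas hindep p hid c₁ c₂ hc₂ hA
end
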